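/- Let (P_m)_{m≥1} be a sequence of finite measurable partitions of X such that P_{m+1} refines P_m for every m and which is generating for X relative to π, i.e. ( ⋁_{m≥1} ⋁_{g∈G} T^{-g}P_m ) ∨ π^{-1}(B_Y) = B_X modulo μ-null sets. Then for every rate function U and every Følner sequence (F_n) for G, h_slow^{U,(F_n)}(X | π) = lim_{m→∞} h_slow^{U,(F_n)}(X, P_m | π) = sup_m h_slow^{U,(F_n)}(X, P_m | π). -/

import Mathlib

/-!
Refinement makes `m ↦ h(P_m)` monotone, so the point is `h(P) ≤ sup_m h(P_m)` for an arbitrary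
finite partition `P`. Since the names `(P_k(T^g x))_{g ∈ K}` together with `π x` generate, `P` is
`μ`-close to a partition `Q` that is a function of `(π x, (P_k(T^g x))_{g ∈ K})` for some `k` and
finite `K ∋ 1`. Inside a fibre of `π`, a disagreement of `Q`-names at `f` forces a disagreement of
`P_k`-names at some `g f` with `g ∈ K`, so Hamming balls for `P_k` along `KF` are Hamming balls
for `Q` along `F` up to the factor `|K|²`; the Følner property makes `KF` almost `F`, and Markov's
inequality (on `Y`, then on the fibres) passes the closeness of `P` and `Q` to most fibres. Hence
`cov(μ, P, F_n, ε | π) ≤ cov(μ, P_k, F_n, ε' | π)` for large `n`, with `ε' > 0` depending only on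
`ε` and `K`.
-/

open MeasureTheory Filter Set Topology
open scoped ENNReal Classical symmDiff

section SlowEntropyDefs

variable {G : Type*} [Group G]

/-- A measure-preserving action of a group `G` on a probability space. -/
structure IsMPSystem {X : Type*} [MeasurableSpace X] (T : G → X → X) (μ : Measure X) : Prop where
  prob : IsProbabilityMeasure μ
  meas : ∀ g, Measurable (T g)
  mp : ∀ g, MeasurePreserving (T g) μ μ
  mul : ∀ g g' x, T (g * g') x = T g (T g' x)
  one : ∀ x, T 1 x = x

/-- A factor map between measure-preserving `G`-systems. -/
structure IsFactorMap {X Y : Type*} [MeasurableSpace X] [MeasurableSpace Y]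
    (T : G → X → X) (μ : Measure X) (S : G → Y → Y) (ν : Measure Y) (π : X → Y) : Prop where
  meas : Measurable π
  map : μ.map π = ν
  equiv : ∀ g x, π (T g x) = S g (π x)

/-- An isomorphism of measure-preserving `G`-systems: a factor map with an a.e. two-sided
inverse factor map. -/
def IsIsomorphism {X Y : Type*} [MeasurableSpace X] [MeasurableSpace Y]
    (T : G → X → X) (μ : Measure X) (S : G → Y → Y) (ν : Measure Y) (π : X → Y) : Prop :=
  IsFactorMap T μ S ν π ∧ ∃ ρ : Y → X, IsFactorMap S ν T μ ρ ∧
    (∀ᵐ x ∂μ, ρ (π x) = x) ∧ (∀ᵐ y ∂ν, π (ρ y) = y)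

/-- `μy` is a disintegration of `μ` over the map `π : X → Y` (with `ν` the image of `μ`). -/
structure IsDisintegration {X Y : Type*} [MeasurableSpace X] [MeasurableSpace Y]
    (μ : Measure X) (ν : Measure Y) (π : X → Y) (μy : Y → Measure X) : Prop where
  prob : ∀ y, IsProbabilityMeasure (μy y)
  meas : ∀ s : Set X, MeasurableSet s → Measurable fun y => μy y s
  eq : ∀ s : Set X, MeasurableSet s → μ s = ∫⁻ y, μy y s ∂ν
  supp : ∀ᵐ y ∂ν, μy y (π ⁻¹' {y}) = 1

/-- A (left) Følner sequence for `G`: a sequence of nonempty finite subsets `F n ⊆ G` with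
`|gFₙ ∩ Fₙ| / |Fₙ| → 1` for every `g ∈ G`. -/
def IsFolner (F : ℕ → Finset G) : Prop :=
  (∀ n, (F n).Nonempty) ∧ ∀ g : G,
    Tendsto (fun n => ((((F n).image fun h => g * h) ∩ F n).card : ℝ) / ((F n).card : ℝ))
      atTop (nhds 1)

/-- The normalized Hamming distance `d_{P,F}` between the `(P,F)`-names of two points. -/
noncomputable def hamDist {X : Type*} (T : G → X → X) {r : ℕ} (P : X → Fin r)
    (F : Finset G) (x x' : X) : ℝ :=
  ((F.filter fun f => P (T f x) ≠ P (T f x')).card : ℝ) / (F.card : ℝ)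

/-- The set `E` has `d_{P,F}`-diameter at most `ε`. -/
def diamLE {X : Type*} (T : G → X → X) {r : ℕ} (P : X → Fin r) (F : Finset G)
    (E : Set X) (ε : ℝ) : Prop :=
  ∀ x ∈ E, ∀ x' ∈ E, hamDist T P F x x' ≤ ε

/-- The Hamming `ε`-covering number `cov(λ, P, F, ε)`: the smallest `M` such that there are
sets `E₁, …, E_M` of `d_{P,F}`-diameter at most `ε` whose union has `λ`-measure `≥ 1 - ε`. -/
noncomputable def hamCov {X : Type*} [MeasurableSpace X] (T : G → X → X) (lam : Measure X)
    {r : ℕ} (P : X → Fin r) (F : Finset G) (ε : ℝ) : ℕ :=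
  sInf {M : ℕ | ∃ E : Fin M → Set X, (∀ i, diamLE T P F (E i) ε) ∧
    ENNReal.ofReal (1 - ε) ≤ lam (⋃ i, E i)}

/-- The relative Hamming `ε`-covering number `cov(μ, P, F, ε | π)`, defined through the
disintegration `μy` of `μ` over `π` and the image measure `ν`: the smallest `M` such that
there exists `S ⊆ Y` with `ν S ≥ 1 - ε` and `cov(μ_y, P, F, ε) ≤ M` for every `y ∈ S`. -/
noncomputable def hamCovRel {X Y : Type*} [MeasurableSpace X] [MeasurableSpace Y]
    (T : G → X → X) (μy : Y → Measure X) (ν : Measure Y) {r : ℕ} (P : X → Fin r)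
    (F : Finset G) (ε : ℝ) : ℕ :=
  sInf {M : ℕ | ∃ S : Set Y, MeasurableSet S ∧ ENNReal.ofReal (1 - ε) ≤ ν S ∧
    ∀ y ∈ S, hamCov T (μy y) P F ε ≤ M}

/-- A rate function: an increasing positive function on `ℕ` tending to infinity. -/
def IsRateFunction (U : ℕ → ℝ) : Prop :=
  (∀ n, 0 < U n) ∧ Monotone U ∧ Tendsto U atTop atTop

/-- Relative slow entropy of a partition:
`sup_{ε>0} limsup_n cov(μ, P, F_n, ε | π) / U(|F_n|)`, valued in `[0,∞]`. -/
noncomputable def slowEntropyPartRel {X Y : Type*} [MeasurableSpace X] [MeasurableSpace Y]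
    (T : G → X → X) (μy : Y → Measure X) (ν : Measure Y) {r : ℕ} (P : X → Fin r)
    (U : ℕ → ℝ) (F : ℕ → Finset G) : ℝ≥0∞ :=
  ⨆ ε ∈ Ioi (0 : ℝ),
    Filter.limsup
      (fun n => ENNReal.ofReal ((hamCovRel T μy ν P (F n) ε : ℝ) / U (F n).card)) atTop

/-- Relative slow entropy: the supremum over all finite measurable partitions. -/
noncomputable def slowEntropyRel {X Y : Type*} [MeasurableSpace X] [MeasurableSpace Y]
    (T : G → X → X) (μy : Y → Measure X) (ν : Measure Y)
    (U : ℕ → ℝ) (F : ℕ → Finset G) : ℝ≥0∞ :=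
  ⨆ (r : ℕ) (P : X → Fin r) (_ : Measurable P), slowEntropyPartRel T μy ν P U F

/-- The partition distance `dist_λ(P, Q) = λ{x : P(x) ≠ Q(x)}` between two labeled
partitions indexed by the same set. -/
noncomputable def partDist {Z : Type*} [MeasurableSpace Z] (lam : Measure Z)
    {ι : Type*} (P Q : Z → ι) : ℝ≥0∞ :=
  lam {z | P z ≠ Q z}

/-- Ergodicity of a measure-preserving `G`-action. -/
def IsErgodicAction {X : Type*} [MeasurableSpace X] (T : G → X → X) (μ : Measure X) : Prop :=
  ∀ s : Set X, MeasurableSet s → (∀ g, T g ⁻¹' s = s) → μ s = 0 ∨ μ s = 1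

end SlowEntropyDefs

open scoped Pointwise

section Hamming

variable {G X : Type*} (T : G → X → X) {r : ℕ}

lemma hamDist_le_of_factor {r' : ℕ} {P : X → Fin r} {Q : X → Fin r'} {c : Fin r' → Fin r}
    (hc : P = c ∘ Q) (F : Finset G) (x x' : X) :
    hamDist T P F x x' ≤ hamDist T Q F x x' := by
  unfold hamDist
  gcongr with f
  intro hQ
  simp [hc, hQ]

noncomputable def nameMismatch (P Q : X → Fin r) (F : Finset G) (x : X) : ℝ :=
  ((F.filter fun f => P (T f x) ≠ Q (T f x)).card : ℝ) / F.card

lemma hamDist_le_add_nameMismatch (P Q : X → Fin r) (F : Finset G) (x x' : X) :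
    hamDist T P F x x' ≤
      hamDist T Q F x x' + nameMismatch T P Q F x + nameMismatch T P Q F x' := by
  have hsub : (F.filter fun f => P (T f x) ≠ P (T f x')) ⊆
      ((F.filter fun f => Q (T f x) ≠ Q (T f x')) ∪
        F.filter fun f => P (T f x) ≠ Q (T f x)) ∪ F.filter fun f => P (T f x') ≠ Q (T f x') := by
    intro f
    simp only [Finset.mem_union, Finset.mem_filter]
    grind
  unfold hamDist nameMismatch
  rw [← add_div, ← add_div]
  gcongr
  exact_mod_cast (Finset.card_le_card hsub).trans
    ((Finset.card_union_le _ _).trans (by gcongr; exact Finset.card_union_le _ _))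

lemma hamDist_le_add_card_sdiff (P : X → Fin r) {F F' : Finset G} (hFF' : F ⊆ F') (x x' : X) :
    hamDist T P F' x x' ≤ hamDist T P F x x' + ((F' \ F).card : ℝ) / F'.card := by
  have hsub : (F'.filter fun f => P (T f x) ≠ P (T f x')) ⊆
      (F.filter fun f => P (T f x) ≠ P (T f x')) ∪ (F' \ F) := by
    intro f
    simp only [Finset.mem_union, Finset.mem_filter, Finset.mem_sdiff]
    tauto
  have hF : ((F.filter fun f => P (T f x) ≠ P (T f x')).card : ℝ) / F'.card ≤
      hamDist T P F x x' := by
    rcases F.eq_empty_or_nonempty with rfl | hF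
    · simp [hamDist]
    · exact div_le_div_of_nonneg_left (by positivity) (by simpa using hF)
        (by exact_mod_cast Finset.card_le_card hFF')
  calc hamDist T P F' x x'
      ≤ ((F.filter fun f => P (T f x) ≠ P (T f x')).card : ℝ) / F'.card
        + ((F' \ F).card : ℝ) / F'.card := by
        unfold hamDist
        rw [← add_div]
        gcongr
        exact_mod_cast (Finset.card_le_card hsub).trans (Finset.card_union_le _ _)
    _ ≤ _ := by gcongr

/-- Each disagreement along `KF` is counted at most `|K|` times, and `|KF| ≤ |K| |F|`. -/
lemma hamDist_le_card_sq_mul [Group G] {r' : ℕ} (P : X → Fin r) (Q : X → Fin r')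
    (K F : Finset G) {x x' : X}
    (hQ : ∀ f ∈ F, Q (T f x) ≠ Q (T f x') → ∃ g ∈ K, P (T (g * f) x) ≠ P (T (g * f) x')) :
    hamDist T Q F x x' ≤ K.card ^ 2 * hamDist T P (K * F) x x' := by
  set BadQ := F.filter fun f => Q (T f x) ≠ Q (T f x')
  set BadP := (K * F).filter fun h => P (T h x) ≠ P (T h x')
  have hcount : BadQ.card ≤ BadP.card * K.card := by
    have hsub : BadQ ⊆ BadP.biUnion fun h => K.image fun g => g⁻¹ * h := by
      intro f hf
      obtain ⟨hfF, hne⟩ := Finset.mem_filter.mp hf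
      obtain ⟨g, hgK, hg⟩ := hQ f hfF hne
      exact Finset.mem_biUnion.mpr ⟨g * f, Finset.mem_filter.mpr
        ⟨Finset.mul_mem_mul hgK hfF, hg⟩, Finset.mem_image.mpr ⟨g, hgK, by group⟩⟩
    calc BadQ.card ≤ ∑ h ∈ BadP, (K.image fun g => g⁻¹ * h).card :=
          (Finset.card_le_card hsub).trans Finset.card_biUnion_le
      _ ≤ BadP.card * K.card := Finset.sum_le_card_nsmul _ _ _ fun h _ => Finset.card_image_le
  show (BadQ.card : ℝ) / F.card ≤ K.card ^ 2 * ((BadP.card : ℝ) / (K * F).card)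
  rcases Nat.eq_zero_or_pos BadP.card with hP0 | hPpos
  · have : BadQ.card = 0 := by simpa [hP0] using hcount
    rw [this, Nat.cast_zero, zero_div]
    positivity
  have hKF : 0 < (K * F).card := hPpos.trans_le (Finset.card_filter_le _ _)
  have hK : 0 < K.card := (Finset.card_pos.mp hKF).of_mul_left.card_pos
  have hF : 0 < F.card := (Finset.card_pos.mp hKF).of_mul_right.card_pos
  have hKFle : ((K * F).card : ℝ) ≤ K.card * F.card := by exact_mod_cast Finset.card_mul_le
  calc (BadQ.card : ℝ) / F.card ≤ BadP.card * K.card / F.card := by gcongr; exact_mod_cast hcount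
    _ = K.card ^ 2 * BadP.card / (K.card * F.card) := by field_simp
    _ ≤ K.card ^ 2 * BadP.card / (K * F).card := by gcongr
    _ = _ := mul_div_assoc _ _ _

end Hamming

lemma ofReal_one_sub_le_measure_inter {Ω : Type*} [MeasurableSpace Ω] {μ : Measure Ω}
    {s t : Set Ω} {ε ε' : ℝ} (hε : ε' ≤ ε) (hs : ENNReal.ofReal (1 - ε') ≤ μ s)
    (ht : μ tᶜ ≤ ENNReal.ofReal (ε - ε')) : ENNReal.ofReal (1 - ε) ≤ μ (s ∩ t) :=
  calc ENNReal.ofReal (1 - ε) = ENNReal.ofReal (1 - ε') - ENNReal.ofReal (ε - ε') := by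
        rw [← ENNReal.ofReal_sub _ (sub_nonneg.mpr hε)]; ring_nf
    _ ≤ μ s - μ tᶜ := tsub_le_tsub hs ht
    _ ≤ μ (s \ tᶜ) := le_measure_sdiff
    _ = μ (s ∩ t) := by rw [Set.sdiff_compl]

section Covering

variable {G X : Type*} [MeasurableSpace X] (T : G → X → X) (lam : Measure X)
  [IsProbabilityMeasure lam] {r : ℕ}

/-- The cylinder sets of `(P, F)`-names form a cover by sets of diameter zero. -/
lemma exists_cover_card_names (P : X → Fin r) (F : Finset G) {ε : ℝ} (hε : 0 ≤ ε) :
    ∃ E : Fin (Fintype.card (F → Fin r)) → Set X,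
      (∀ i, diamLE T P F (E i) ε) ∧ ENNReal.ofReal (1 - ε) ≤ lam (⋃ i, E i) := by
  let name : X → (F → Fin r) := fun x f => P (T f x)
  let e := Fintype.equivFin (F → Fin r)
  refine ⟨fun i => name ⁻¹' {e.symm i}, fun i x hx x' hx' => ?_, ?_⟩
  · have hxx' : name x = name x' := hx.trans hx'.symm
    have : (F.filter fun f => P (T f x) ≠ P (T f x')) = ∅ :=
      Finset.filter_false_of_mem fun f hf => not_not.mpr (congrFun hxx' ⟨f, hf⟩)
    simpa [hamDist, this] using hε
  · rw [← preimage_iUnion, iUnion_singleton_eq_range, e.symm.surjective.range_eq, preimage_univ,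
      measure_univ]
    exact ENNReal.ofReal_le_one.mpr (by linarith)

lemma hamCov_le_card (P : X → Fin r) (F : Finset G) {ε : ℝ} (hε : 0 ≤ ε) :
    hamCov T lam P F ε ≤ Fintype.card (F → Fin r) :=
  Nat.sInf_le (exists_cover_card_names T lam P F hε)

lemma exists_cover_card_hamCov (P : X → Fin r) (F : Finset G) {ε : ℝ} (hε : 0 ≤ ε) :
    ∃ E : Fin (hamCov T lam P F ε) → Set X,
      (∀ i, diamLE T P F (E i) ε) ∧ ENNReal.ofReal (1 - ε) ≤ lam (⋃ i, E i) :=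
  Nat.sInf_mem (s := {M | ∃ _ : Fin M → Set X, _}) ⟨_, exists_cover_card_names T lam P F hε⟩

/-- Covers for `(Q, F', ε')` restricted to `A` are covers for `(P, F, ε)`. -/
lemma hamCov_le_hamCov {r' : ℕ} {P : X → Fin r} {Q : X → Fin r'} {F F' : Finset G} {ε ε' : ℝ}
    (hε' : 0 ≤ ε') (hε'ε : ε' ≤ ε) {A : Set X} (hA : lam Aᶜ ≤ ENNReal.ofReal (ε - ε'))
    (hdist : ∀ x ∈ A, ∀ x' ∈ A, hamDist T Q F' x x' ≤ ε' → hamDist T P F x x' ≤ ε) :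
    hamCov T lam P F ε ≤ hamCov T lam Q F' ε' := by
  obtain ⟨E, hE, hcov⟩ := exists_cover_card_hamCov T lam Q F' hε'
  refine Nat.sInf_le ⟨fun i => E i ∩ A,
    fun i x hx x' hx' => hdist x hx.2 x' hx'.2 (hE i x hx.1 x' hx'.1), ?_⟩
  rw [← iUnion_inter]
  exact ofReal_one_sub_le_measure_inter hε'ε hcov hA

end Covering

section RelativeCovering

variable {G X Y : Type*} [MeasurableSpace X] [MeasurableSpace Y] (T : G → X → X)
  {μy : Y → Measure X} (ν : Measure Y) [IsProbabilityMeasure ν]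
  (hμy : ∀ y, IsProbabilityMeasure (μy y)) {r : ℕ}
include hμy

lemma exists_hamCovRel_spec (P : X → Fin r) (F : Finset G) {ε : ℝ} (hε : 0 ≤ ε) :
    ∃ S : Set Y, MeasurableSet S ∧ ENNReal.ofReal (1 - ε) ≤ ν S ∧
      ∀ y ∈ S, hamCov T (μy y) P F ε ≤ hamCovRel T μy ν P F ε :=
  Nat.sInf_mem (s := {M | ∃ S : Set Y, MeasurableSet S ∧ ENNReal.ofReal (1 - ε) ≤ ν S ∧
      ∀ y ∈ S, hamCov T (μy y) P F ε ≤ M})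
    ⟨_, univ, .univ, by simpa using ENNReal.ofReal_le_one.mpr (by linarith : 1 - ε ≤ 1),
      fun y _ => have := hμy y; hamCov_le_card T (μy y) P F hε⟩

lemma hamCovRel_le_hamCovRel {r' : ℕ} {P : X → Fin r} {Q : X → Fin r'} {F F' : Finset G}
    {ε ε' : ℝ} (hε' : 0 ≤ ε') (hε'ε : ε' ≤ ε) {S : Set Y} (hS : MeasurableSet S)
    (hSc : ν Sᶜ ≤ ENNReal.ofReal (ε - ε'))
    (h : ∀ᵐ y ∂ν, y ∈ S → hamCov T (μy y) P F ε ≤ hamCov T (μy y) Q F' ε') :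
    hamCovRel T μy ν P F ε ≤ hamCovRel T μy ν Q F' ε' := by
  obtain ⟨S', hS'm, hS'ν, hS'⟩ := exists_hamCovRel_spec T ν hμy Q F' hε'
  obtain ⟨N, hN, hNm, hN0⟩ := exists_measurable_superset_of_null (ae_iff.mp h)
  refine Nat.sInf_le ⟨(S' ∩ S) \ N, (hS'm.inter hS).diff hNm, ?_, fun y hy => ?_⟩
  · rw [measure_sdiff_null hN0]
    exact ofReal_one_sub_le_measure_inter hε'ε hS'ν hSc
  · have hgood : y ∈ S → _ := not_not.mp fun hbad => hy.2 (hN hbad)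
    exact (hgood hy.1.2).trans (hS' y hy.1.1)

end RelativeCovering

lemma ENNReal.ofReal_div_le_ofReal_div {a b : ℝ} (ha : 0 ≤ a) (hab : a ≤ b) (u : ℝ) :
    ENNReal.ofReal (a / u) ≤ ENNReal.ofReal (b / u) := by
  rcases le_or_gt 0 u with hu | hu
  · exact ENNReal.ofReal_le_ofReal (div_le_div_of_nonneg_right hab hu)
  · rw [ENNReal.ofReal_of_nonpos (div_nonpos_of_nonneg_of_nonpos ha hu.le)]
    exact zero_le

section SlowEntropy

variable {G X Y : Type*} [MeasurableSpace X] [MeasurableSpace Y] (T : G → X → X)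
  {μy : Y → Measure X} {ν : Measure Y} {r : ℕ}

lemma slowEntropyPartRel_le_of_forall_exists {P : X → Fin r} {U : ℕ → ℝ} {F : ℕ → Finset G}
    {e : ℝ≥0∞}
    (h : ∀ ε > 0, ∃ (r' : ℕ) (Q : X → Fin r'), ∃ ε' > 0,
      (∀ᶠ n in atTop, hamCovRel T μy ν P (F n) ε ≤ hamCovRel T μy ν Q (F n) ε') ∧
      slowEntropyPartRel T μy ν Q U F ≤ e) :
    slowEntropyPartRel T μy ν P U F ≤ e := by
  refine iSup₂_le fun ε hε => ?_
  obtain ⟨r', Q, ε', hε', hev, hQ⟩ := h ε hε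
  calc limsup (fun n => ENNReal.ofReal ((hamCovRel T μy ν P (F n) ε : ℝ) / U (F n).card)) atTop
      ≤ limsup (fun n => ENNReal.ofReal ((hamCovRel T μy ν Q (F n) ε' : ℝ) / U (F n).card))
          atTop :=
        limsup_le_limsup (hev.mono fun n hn =>
          ENNReal.ofReal_div_le_ofReal_div (Nat.cast_nonneg _) (Nat.cast_le.mpr hn) _)
    _ ≤ slowEntropyPartRel T μy ν Q U F := le_iSup₂_of_le ε' hε' le_rfl
    _ ≤ e := hQ

lemma slowEntropyPartRel_le_of_factor [IsProbabilityMeasure ν]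
    (hμy : ∀ y, IsProbabilityMeasure (μy y)) {r' : ℕ} {P : X → Fin r} {Q : X → Fin r'}
    {c : Fin r' → Fin r} (hc : P = c ∘ Q) (U : ℕ → ℝ) (F : ℕ → Finset G) :
    slowEntropyPartRel T μy ν P U F ≤ slowEntropyPartRel T μy ν Q U F := by
  refine slowEntropyPartRel_le_of_forall_exists T fun ε hε => ⟨r', Q, ε, hε, ?_, le_rfl⟩
  refine .of_forall fun n => hamCovRel_le_hamCovRel T ν hμy hε.le le_rfl .univ (by simp) ?_
  refine ae_of_all _ fun y _ => ?_
  have := hμy y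
  exact hamCov_le_hamCov T (μy y) hε.le le_rfl (A := univ) (by simp)
    fun x _ x' _ hx => (hamDist_le_of_factor T hc _ x x').trans hx

end SlowEntropy

section Approximation

variable {X : Type*}

lemma isSetAlgebra_setOf_exists_measurableSet {ι : Type*} [Nonempty ι]
    {m : ι → MeasurableSpace X} (hm : Directed (· ≤ ·) m) :
    IsSetAlgebra {s | ∃ i, MeasurableSet[m i] s} where
  empty_mem := ⟨Classical.arbitrary ι, @MeasurableSet.empty _ (m _)⟩
  compl_mem := fun _ ⟨i, hs⟩ => ⟨i, hs.compl⟩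
  union_mem := fun _ _ ⟨i, hs⟩ ⟨j, ht⟩ =>
    let ⟨k, hik, hjk⟩ := hm i j
    ⟨k, (hik _ hs).union (hjk _ ht)⟩

lemma eq_of_measurable_comap {Z κ : Type*} [mZ : MeasurableSpace Z] [MeasurableSpace κ]
    [MeasurableSingletonClass κ] {φ : X → Z} {q : X → κ} (hq : Measurable[mZ.comap φ] q)
    {x x' : X} (h : φ x = φ x') : q x = q x' := by
  obtain ⟨C, -, hC⟩ := hq (measurableSet_singleton (q x))
  have hx : x ∈ φ ⁻¹' C := hC ▸ rfl
  have hx' : x' ∈ q ⁻¹' {q x} := hC ▸ (show φ x' ∈ C from h ▸ hx)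
  exact hx'.symm

variable [mX : MeasurableSpace X]

lemma exists_measurableSet_symmDiff_lt_of_directed (μ : Measure X) [IsFiniteMeasure μ]
    {ι : Type*} [Nonempty ι] {m : ι → MeasurableSpace X} (hm : Directed (· ≤ ·) m)
    (hle : ∀ i, m i ≤ mX)
    (hgen : ∀ s, MeasurableSet s → ∃ t, MeasurableSet[⨆ i, m i] t ∧ μ (s ∆ t) = 0)
    {s : Set X} (hs : MeasurableSet s) {δ : ℝ} (hδ : 0 < δ) :
    ∃ i t, MeasurableSet[m i] t ∧ μ (s ∆ t) < ENNReal.ofReal δ := by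
  obtain ⟨t, ht, hst⟩ := hgen s hs
  have hsup : (⨆ i, m i) ≤ mX := iSup_le hle
  have : IsFiniteMeasure (μ.trim hsup) := isFiniteMeasure_trim hsup
  have hdense := Measure.MeasureDense.of_generateFrom_isSetAlgebra_finite (m := ⨆ i, m i)
    (μ.trim hsup)
    (isSetAlgebra_setOf_exists_measurableSet hm)
    (by rw [← MeasurableSpace.generateFrom_iUnion_measurableSet]; congr 1; ext; simp)
  obtain ⟨u, ⟨i, hu⟩, htu⟩ :=
    @Measure.MeasureDense.approx X (⨆ i, m i) _ _ hdense t ht (measure_ne_top _ _) δ hδ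
  rw [trim_measurableSet_eq hsup (ht.symmDiff (le_iSup m i _ hu))] at htu
  refine ⟨i, u, hu, ?_⟩
  calc μ (s ∆ u) ≤ μ (s ∆ t) + μ (t ∆ u) := measure_symmDiff_le s t u
    _ < ENNReal.ofReal δ := by rwa [hst, zero_add]

lemma exists_measurable_eq_of_mem {ι : Type*} [MeasurableSpace ι] [Fintype ι] [Nonempty ι]
    {C : ι → Set X} (hC : ∀ i, MeasurableSet (C i)) :
    ∃ q : X → ι, Measurable q ∧ ∀ x i, x ∈ C i → (∀ j ≠ i, x ∉ C j) → q x = i := by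
  suffices ∀ s : Finset ι, ∃ q : X → ι, Measurable q ∧
      ∀ x, ∀ i ∈ s, x ∈ C i → (∀ j ≠ i, x ∉ C j) → q x = i by
    obtain ⟨q, hq, hqC⟩ := this Finset.univ
    exact ⟨q, hq, fun x i => hqC x i (Finset.mem_univ i)⟩
  intro s
  induction s using Finset.induction_on with
  | empty => exact ⟨fun _ => Classical.arbitrary ι, measurable_const, by simp⟩
  | insert a s _ ih =>
    obtain ⟨q, hq, hqC⟩ := ih
    refine ⟨(C a).piecewise (fun _ => a) q, measurable_const.piecewise (hC a) hq,
      fun x i hi hxi hne => ?_⟩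
    by_cases hxa : x ∈ C a
    · rw [piecewise_eq_of_mem _ _ _ hxa]
      by_contra hai
      exact hne a hai hxa
    · rw [piecewise_eq_of_notMem _ _ _ hxa]
      have hia : i ≠ a := fun h => hxa (h ▸ hxi)
      exact hqC x i ((Finset.mem_insert.mp hi).resolve_left hia) hxi hne

lemma exists_measurable_ne_lt_of_directed (μ : Measure X) [IsFiniteMeasure μ]
    {ι : Type*} [Nonempty ι] {m : ι → MeasurableSpace X} (hm : Directed (· ≤ ·) m)
    (hle : ∀ i, m i ≤ mX)
    (hgen : ∀ s, MeasurableSet s → ∃ t, MeasurableSet[⨆ i, m i] t ∧ μ (s ∆ t) = 0)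
    {κ : Type*} [Fintype κ] [Nonempty κ] [MeasurableSpace κ] [MeasurableSingletonClass κ]
    {P : X → κ} (hP : Measurable P) {δ : ℝ} (hδ : 0 < δ) :
    ∃ i, ∃ q : X → κ, Measurable[m i] q ∧ μ {x | P x ≠ q x} < ENNReal.ofReal δ := by
  have hκ : (0 : ℝ) < Fintype.card κ := by exact_mod_cast Fintype.card_pos
  choose i t ht hPt using fun j : κ => exists_measurableSet_symmDiff_lt_of_directed μ hm hle hgen
    (hP (measurableSet_singleton j)) (div_pos hδ hκ)
  obtain ⟨a, ha⟩ := hm.finset_le (Finset.univ.image i)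
  obtain ⟨q, hq, hqt⟩ := @exists_measurable_eq_of_mem X (m a) κ _ _ _ t
    fun j => ha _ (Finset.mem_image_of_mem _ (Finset.mem_univ j)) _ (ht j)
  refine ⟨a, q, hq, ?_⟩
  have hsub : {x | P x ≠ q x} ⊆ ⋃ j, (P ⁻¹' {j}) ∆ t j := by
    intro x hx
    by_contra hcon
    simp only [mem_iUnion, mem_symmDiff, mem_preimage, mem_singleton_iff, not_exists, not_or,
      not_and, not_not] at hcon
    exact hx (hqt x (P x) ((hcon (P x)).1 rfl) fun j hj hxj => hj ((hcon j).2 hxj).symm).symm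
  calc μ {x | P x ≠ q x} ≤ ∑ j, μ ((P ⁻¹' {j}) ∆ t j) :=
        (measure_mono hsub).trans (measure_iUnion_fintype_le _ _)
    _ < ∑ _j : κ, ENNReal.ofReal (δ / Fintype.card κ) :=
        ENNReal.sum_lt_sum_of_nonempty Finset.univ_nonempty fun j _ => hPt j
    _ = ENNReal.ofReal δ := by
        rw [Finset.sum_const, Finset.card_univ, nsmul_eq_mul, ← ENNReal.ofReal_natCast,
          ← ENNReal.ofReal_mul (by positivity), mul_div_cancel₀ _ hκ.ne']

end Approximation

section RelativeNames

variable {G X Y : Type*} [MeasurableSpace Y] (T : G → X → X) {r : ℕ → ℕ}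
  (Pm : ∀ k, X → Fin (r k)) (π : X → Y)

/-- Indexed by pairs `a = (k, K)` so that the σ-algebras `comap (relName a)` form a single
directed family. -/
def relName (a : ℕ × Finset G) (x : X) : (a.2 → Fin (r a.1)) × Y :=
  (fun g => Pm a.1 (T g x), π x)

lemma measurable_relName [MeasurableSpace X] (hT : ∀ g, Measurable (T g))
    (hPm : ∀ k, Measurable (Pm k)) (hπ : Measurable π) (a : ℕ × Finset G) :
    Measurable (relName T Pm π a) :=
  (measurable_pi_lambda (fun x (g : a.2) => Pm a.1 (T g x)) fun g => (hPm a.1).comp (hT g)).prodMk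
    hπ

lemma monotone_comap_relName
    (hPm : ∀ k k', k ≤ k' → ∃ c : Fin (r k') → Fin (r k), Pm k = c ∘ Pm k') :
    Monotone fun a => MeasurableSpace.comap (relName T Pm π a) inferInstance := by
  rintro ⟨k, K⟩ ⟨k', K'⟩ ⟨hk, hK⟩
  obtain ⟨c, hc⟩ := hPm k k' hk
  let ψ : (K' → Fin (r k')) × Y → (K → Fin (r k)) × Y :=
    fun p => (fun g => c (p.1 ⟨g, hK g.2⟩), p.2)
  have hψ : Measurable ψ := by
    have := measurable_of_finite c
    fun_prop
  have hfac : relName T Pm π (k, K) = ψ ∘ relName T Pm π (k', K') := by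
    funext x
    simp [relName, ψ, hc]
  simp only [hfac, ← MeasurableSpace.comap_comp]
  exact MeasurableSpace.comap_mono hψ.comap_le

lemma generateFrom_le_iSup_comap_relName :
    MeasurableSpace.generateFrom
        ({A | ∃ (k : ℕ) (g : G) (i : Fin (r k)), A = T g ⁻¹' (Pm k ⁻¹' {i})} ∪
          {A | ∃ B : Set Y, MeasurableSet B ∧ A = π ⁻¹' B}) ≤
      ⨆ a, MeasurableSpace.comap (relName T Pm π a) inferInstance := by
  refine MeasurableSpace.generateFrom_le ?_
  rintro _ (⟨k, g, i, rfl⟩ | ⟨B, hB, rfl⟩)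
  · refine le_iSup (fun a => MeasurableSpace.comap (relName T Pm π a) inferInstance) (k, {g}) _
      ⟨(fun p => p.1 ⟨g, Finset.mem_singleton_self g⟩) ⁻¹' {i},
        ((measurable_pi_apply _).comp measurable_fst) (measurableSet_singleton i), rfl⟩
  · exact le_iSup (fun a => MeasurableSpace.comap (relName T Pm π a) inferInstance) (0, ∅) _
      ⟨Prod.snd ⁻¹' B, measurable_snd hB, rfl⟩

end RelativeNames

namespace IsDisintegration

variable {X Y : Type*} [MeasurableSpace X] [MeasurableSpace Y] {μ : Measure X} {ν : Measure Y}
  {π : X → Y} {μy : Y → Measure X}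

lemma measurable (h : IsDisintegration μ ν π μy) : Measurable μy :=
  Measure.measurable_of_measurable_coe _ h.meas

lemma bind_eq (h : IsDisintegration μ ν π μy) : ν.bind μy = μ :=
  Measure.ext fun s hs => by rw [Measure.bind_apply hs h.measurable.aemeasurable, h.eq s hs]

lemma lintegral_lintegral (h : IsDisintegration μ ν π μy) {f : X → ℝ≥0∞} (hf : Measurable f) :
    ∫⁻ y, ∫⁻ x, f x ∂μy y ∂ν = ∫⁻ x, f x ∂μ := by
  rw [← Measure.lintegral_bind h.measurable.aemeasurable (by rw [h.bind_eq]; exact hf.aemeasurable),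
    h.bind_eq]

end IsDisintegration

lemma meas_ge_ofReal_le_ofReal_div {Ω : Type*} [MeasurableSpace Ω] {μ : Measure Ω}
    {f : Ω → ℝ≥0∞} (hf : AEMeasurable f μ) {a b : ℝ} (ha : 0 < a)
    (hb : ∫⁻ x, f x ∂μ ≤ ENNReal.ofReal b) :
    μ {x | ENNReal.ofReal a ≤ f x} ≤ ENNReal.ofReal (b / a) := by
  refine (meas_ge_le_lintegral_div hf (by positivity) ENNReal.ofReal_ne_top).trans ?_
  rw [ENNReal.ofReal_div_of_pos ha]
  gcongr

section Mismatch

variable {G X : Type*} (T : G → X → X) {r : ℕ} {P Q : X → Fin r}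

lemma ofReal_nameMismatch (P Q : X → Fin r) (F : Finset G) (x : X) :
    ENNReal.ofReal (nameMismatch T P Q F x) =
      (F.card : ℝ≥0∞)⁻¹ * ∑ f ∈ F, (T f ⁻¹' {z | P z ≠ Q z}).indicator 1 x := by
  rcases F.eq_empty_or_nonempty with rfl | hF
  · simp [nameMismatch]
  rw [nameMismatch, ENNReal.ofReal_div_of_pos (by exact_mod_cast hF.card_pos),
    ENNReal.ofReal_natCast, ENNReal.ofReal_natCast, ENNReal.div_eq_inv_mul, Finset.card_filter]
  simp [Set.indicator_apply]

lemma measurable_ofReal_nameMismatch [MeasurableSpace X] (hT : ∀ g, Measurable (T g))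
    (hP : Measurable P) (hQ : Measurable Q) (F : Finset G) :
    Measurable fun x => ENNReal.ofReal (nameMismatch T P Q F x) := by
  simp_rw [ofReal_nameMismatch]
  exact (Finset.measurable_sum _ fun f _ =>
    measurable_one.indicator (hT f (measurableSet_eq_fun hP hQ).compl)).const_mul _

lemma lintegral_ofReal_nameMismatch_le [MeasurableSpace X] {μ : Measure X}
    (hT : ∀ g, MeasurePreserving (T g) μ μ) (hP : Measurable P) (hQ : Measurable Q)
    (F : Finset G) :
    ∫⁻ x, ENNReal.ofReal (nameMismatch T P Q F x) ∂μ ≤ μ {z | P z ≠ Q z} := by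
  have hD : MeasurableSet {z | P z ≠ Q z} := (measurableSet_eq_fun hP hQ).compl
  simp_rw [ofReal_nameMismatch]
  rw [lintegral_const_mul _ (Finset.measurable_sum _ fun f _ =>
      measurable_one.indicator ((hT f).measurable hD)),
    lintegral_finsetSum _ fun f _ => measurable_one.indicator ((hT f).measurable hD)]
  simp_rw [lintegral_indicator_one ((hT _).measurable hD), (hT _).measure_preimage
    hD.nullMeasurableSet, Finset.sum_const, nsmul_eq_mul, ← mul_assoc]
  exact mul_le_of_le_one_left' (ENNReal.inv_mul_le_one _)

end Mismatch

namespace IsFolner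

variable {G : Type*} [Group G] {F : ℕ → Finset G}

lemma tendsto_card_image_sdiff_div (hF : IsFolner F) (g : G) :
    Tendsto (fun n => (((F n).image (g * ·) \ F n).card : ℝ) / (F n).card) atTop (𝓝 0) := by
  have hsplit : ∀ n, (((F n).image (g * ·) \ F n).card : ℝ) / (F n).card =
      1 - (((F n).image (g * ·) ∩ F n).card : ℝ) / (F n).card := by
    intro n
    have hcard := Finset.card_inter_add_card_sdiff ((F n).image (g * ·)) (F n)
    rw [Finset.card_image_of_injective _ (mul_right_injective g)] at hcard
    have hFn : ((F n).card : ℝ) ≠ 0 := by exact_mod_cast (hF.1 n).card_pos.ne'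
    field_simp
    linarith [(by exact_mod_cast hcard : (((F n).image (g * ·) ∩ F n).card : ℝ) +
      (((F n).image (g * ·) \ F n).card : ℝ) = (F n).card)]
  have hlim := (hF.2 g).const_sub 1
  rw [sub_self] at hlim
  exact hlim.congr fun n => (hsplit n).symm

lemma eventually_card_mul_sdiff_le (hF : IsFolner F) (K : Finset G) {η : ℝ} (hη : 0 < η) :
    ∀ᶠ n in atTop, (((K * F n) \ F n).card : ℝ) ≤ η * (F n).card := by
  have hsum : Tendsto (fun n => ∑ g ∈ K, (((F n).image (g * ·) \ F n).card : ℝ) / (F n).card)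
      atTop (𝓝 0) := by
    simpa using tendsto_finsetSum K fun g _ => hF.tendsto_card_image_sdiff_div g
  filter_upwards [hsum.eventually_lt_const hη] with n hn
  have hsub : (K * F n) \ F n ⊆ K.biUnion fun g => (F n).image (g * ·) \ F n := by
    intro h hh
    obtain ⟨hKF, hF'⟩ := Finset.mem_sdiff.mp hh
    obtain ⟨g, hg, f, hf, rfl⟩ := Finset.mem_mul.mp hKF
    exact Finset.mem_biUnion.mpr ⟨g, hg, Finset.mem_sdiff.mpr ⟨Finset.mem_image_of_mem _ hf, hF'⟩⟩
  have hFn : ((F n).card : ℝ) ≠ 0 := by exact_mod_cast (hF.1 n).card_pos.ne'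
  calc (((K * F n) \ F n).card : ℝ) ≤ ∑ g ∈ K, (((F n).image (g * ·) \ F n).card : ℝ) := by
        exact_mod_cast (Finset.card_le_card hsub).trans Finset.card_biUnion_le
    _ = (∑ g ∈ K, (((F n).image (g * ·) \ F n).card : ℝ) / (F n).card) * (F n).card := by
        rw [Finset.sum_mul]
        exact Finset.sum_congr rfl fun g _ => (div_mul_cancel₀ _ hFn).symm
    _ ≤ η * (F n).card := by gcongr

end IsFolner

section Comparison

variable {G X Y : Type*} [Group G] [MeasurableSpace X] {T : G → X → X} {S : G → Y → Y}
  {π : X → Y} {rP rR : ℕ} {P Q : X → Fin rP} {R : X → Fin rR} {K F : Finset G}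

lemma hamCov_le_of_determined (lam : Measure X) [IsProbabilityMeasure lam]
    (hmul : ∀ g g' x, T (g * g') x = T g (T g' x)) (hequiv : ∀ g x, π (T g x) = S g (π x))
    (hK : 1 ∈ K) (hQR : ∀ z z', π z = π z' → (∀ g ∈ K, R (T g z) = R (T g z')) → Q z = Q z')
    {A : Set X} (hA : lam Aᶜ = 0) (hπA : ∀ x ∈ A, ∀ x' ∈ A, π x = π x') {ε : ℝ} (hε : 0 < ε)
    (hPQ : lam {x | ε / 4 ≤ nameMismatch T P Q F x} ≤ ENNReal.ofReal (ε / 2))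
    (hKF : (((K * F) \ F).card : ℝ) ≤ ε / (8 * K.card ^ 2) * F.card) :
    hamCov T lam P F ε ≤ hamCov T lam R F (ε / (8 * K.card ^ 2)) := by
  set ε₃ := ε / (8 * K.card ^ 2)
  have hK1 : (1 : ℝ) ≤ K.card := Nat.one_le_cast.mpr (Finset.card_pos.mpr ⟨1, hK⟩)
  have hε₃ : 0 < ε₃ := div_pos hε (by positivity)
  have hcε₃ : K.card ^ 2 * (2 * ε₃) = ε / 4 := by
    have : (K.card : ℝ) ≠ 0 := by positivity
    simp only [ε₃]
    field_simp
    ring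
  have h2ε₃ : 2 * ε₃ ≤ ε / 4 := by nlinarith [one_le_pow₀ (n := 2) hK1]
  have hFKF : F ⊆ K * F := fun f hf => Finset.mem_mul.mpr ⟨1, hK, f, hf, one_mul f⟩
  calc hamCov T lam P F ε ≤ hamCov T lam Q F (ε / 4) := by
        refine hamCov_le_hamCov T lam (by positivity) (by linarith)
          (A := {x | nameMismatch T P Q F x < ε / 4}) ?_ fun x hx x' hx' hQ => ?_
        · simpa [compl_ofPred, not_lt] using hPQ.trans (ENNReal.ofReal_le_ofReal (by linarith))
        · linarith [hamDist_le_add_nameMismatch T P Q F x x', hx.out, hx'.out]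
    _ ≤ hamCov T lam R (K * F) (2 * ε₃) := by
        refine hamCov_le_hamCov T lam (by positivity) h2ε₃ (A := A) (by simp [hA])
          fun x hx x' hx' hR => ?_
        refine (hamDist_le_card_sq_mul T R Q K F fun f _ hf => ?_).trans ?_
        · by_contra! hall
          exact hf (hQR _ _ (by rw [hequiv, hequiv, hπA x hx x' hx'])
            fun g hg => by rw [← hmul, ← hmul]; exact hall g hg)
        · rw [← hcε₃]
          gcongr
    _ ≤ hamCov T lam R F ε₃ := by
        refine hamCov_le_hamCov T lam hε₃.le (by linarith) (A := univ) (by simp)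
          fun x _ x' _ hR => ?_
        have hsdiff : (((K * F) \ F).card : ℝ) / (K * F).card ≤ ε₃ :=
          div_le_of_le_mul₀ (by positivity) hε₃.le (hKF.trans (by gcongr))
        linarith [hamDist_le_add_card_sdiff T R hFKF x x']

/-- Markov's inequality, applied once on `Y` and once on the fibres, reduces the relative
comparison to `hamCov_le_of_determined` on most fibres; with the threshold `ε² / 8` for the fibre
averages of `nameMismatch`, both exceptional sets have measure at most `ε / 2`. -/
lemma hamCovRel_le_of_determined [MeasurableSpace Y] [MeasurableSingletonClass Y]
    {μ : Measure X} {ν : Measure Y} [IsProbabilityMeasure ν] {μy : Y → Measure X}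
    (hX : IsMPSystem T μ) (hπ : IsFactorMap T μ S ν π)
    (hdis : IsDisintegration μ ν π μy) (hP : Measurable P)
    (hQ : Measurable Q) (hK : 1 ∈ K)
    (hQR : ∀ z z', π z = π z' → (∀ g ∈ K, R (T g z) = R (T g z')) → Q z = Q z')
    {ε : ℝ} (hε : 0 < ε) (hPQ : μ {x | P x ≠ Q x} ≤ ENNReal.ofReal (ε ^ 3 / 16))
    (hKF : (((K * F) \ F).card : ℝ) ≤ ε / (8 * K.card ^ 2) * F.card) :
    hamCovRel T μy ν P F ε ≤ hamCovRel T μy ν R F (ε / (8 * K.card ^ 2)) := by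
  have hK1 : (1 : ℝ) ≤ K.card := Nat.one_le_cast.mpr (Finset.card_pos.mpr ⟨1, hK⟩)
  have hε₃le : ε / (8 * K.card ^ 2) ≤ ε / 2 :=
    div_le_div_of_nonneg_left hε.le (by norm_num) (by nlinarith)
  have hmis := measurable_ofReal_nameMismatch T hX.meas hP hQ F
  set b : Y → ℝ≥0∞ := fun y => ∫⁻ x, ENNReal.ofReal (nameMismatch T P Q F x) ∂μy y
  have hb : Measurable b := (Measure.measurable_lintegral hmis).comp hdis.measurable
  have hbint : ∫⁻ y, b y ∂ν ≤ ENNReal.ofReal (ε ^ 3 / 16) :=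
    (hdis.lintegral_lintegral hmis).trans_le
      ((lintegral_ofReal_nameMismatch_le T hX.mp hP hQ F).trans hPQ)
  refine hamCovRel_le_hamCovRel T ν hdis.prob (by positivity) (by linarith)
    (S := {y | b y < ENNReal.ofReal (ε ^ 2 / 8)}) (measurableSet_lt hb measurable_const) ?_ ?_
  · have hbad := meas_ge_ofReal_le_ofReal_div hb.aemeasurable (a := ε ^ 2 / 8) (by positivity) hbint
    rw [show ε ^ 3 / 16 / (ε ^ 2 / 8) = ε / 2 by field_simp; ring] at hbad
    simpa [compl_ofPred, not_lt] using hbad.trans (ENNReal.ofReal_le_ofReal (by linarith))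
  · filter_upwards [hdis.supp] with y hy hby
    have := hdis.prob y
    refine hamCov_le_of_determined (μy y) hX.mul hπ.equiv hK hQR
      ((prob_compl_eq_zero_iff (hπ.meas (measurableSet_singleton y))).mpr hy)
      (fun x hx x' hx' => hx.trans hx'.symm) hε ?_ hKF
    calc μy y {x | ε / 4 ≤ nameMismatch T P Q F x}
        ≤ μy y {x | ENNReal.ofReal (ε / 4) ≤ ENNReal.ofReal (nameMismatch T P Q F x)} :=
          measure_mono fun x hx => ENNReal.ofReal_le_ofReal hx
      _ ≤ ENNReal.ofReal (ε ^ 2 / 8 / (ε / 4)) :=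
          meas_ge_ofReal_le_ofReal_div hmis.aemeasurable (by positivity) (le_of_lt hby)
      _ = ENNReal.ofReal (ε / 2) := by congr 1; field_simp; ring

end Comparison

lemma exists_comp_eq_of_le {X : Type*} {α : ℕ → Type*} {f : ∀ k, X → α k}
    (h : ∀ k, ∃ c : α (k + 1) → α k, f k = c ∘ f (k + 1)) {k k' : ℕ} (hk : k ≤ k') :
    ∃ c : α k' → α k, f k = c ∘ f k' := by
  induction k', hk using Nat.le_induction with
  | base => exact ⟨id, rfl⟩
  | succ k' _ ih =>
    obtain ⟨c₁, hc₁⟩ := ih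
    obtain ⟨c₂, hc₂⟩ := h k'
    exact ⟨c₁ ∘ c₂, by rw [hc₁, hc₂]; rfl⟩

section Generating

variable {G X Y : Type*} [Group G] [MeasurableSpace X] [MeasurableSpace Y] {T : G → X → X}
  {μ : Measure X} {S : G → Y → Y} {ν : Measure Y} {π : X → Y} {μy : Y → Measure X}
  {r : ℕ → ℕ} {Pm : ∀ k, X → Fin (r k)}

lemma exists_determined_approx (hT : ∀ g, Measurable (T g)) (hπ : Measurable π)
    [IsProbabilityMeasure μ] (hmeas : ∀ k, Measurable (Pm k))
    (hfactor : ∀ k k', k ≤ k' → ∃ c : Fin (r k') → Fin (r k), Pm k = c ∘ Pm k')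
    (hgen : ∀ s : Set X, MeasurableSet s → ∃ t : Set X,
      MeasurableSet[MeasurableSpace.generateFrom
        ({A : Set X | ∃ (m : ℕ) (g : G) (i : Fin (r m)), A = T g ⁻¹' (Pm m ⁻¹' {i})} ∪
         {A : Set X | ∃ B : Set Y, MeasurableSet B ∧ A = π ⁻¹' B})] t ∧
      μ (s ∆ t) = 0)
    {rP : ℕ} {P : X → Fin rP} (hP : Measurable P) {δ : ℝ} (hδ : 0 < δ) :
    ∃ (k : ℕ) (K : Finset G), 1 ∈ K ∧ ∃ Q : X → Fin rP, Measurable Q ∧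
      (∀ z z', π z = π z' → (∀ g ∈ K, Pm k (T g z) = Pm k (T g z')) → Q z = Q z') ∧
      μ {x | P x ≠ Q x} < ENNReal.ofReal δ := by
  have : Nonempty (Fin rP) := ⟨P (nonempty_of_isProbabilityMeasure μ).some⟩
  have hle a := (measurable_relName T Pm π hT hmeas hπ a).comap_le
  obtain ⟨⟨k, K⟩, q, hq, hPq⟩ := exists_measurable_ne_lt_of_directed μ
    (monotone_comap_relName T Pm π hfactor).directed_le hle
    (fun s hs => let ⟨t, ht, hst⟩ := hgen s hs
      ⟨t, generateFrom_le_iSup_comap_relName T Pm π t ht, hst⟩) hP hδ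
  refine ⟨k, insert 1 K, Finset.mem_insert_self 1 K, q, hq.mono (hle _) le_rfl,
    fun z z' hzz' hK => eq_of_measurable_comap hq ?_, hPq⟩
  exact Prod.ext (funext fun g => hK g (Finset.mem_insert_of_mem g.2)) hzz'

theorem slowEntropyPartRel_le_iSup_of_generating [IsProbabilityMeasure ν]
    [MeasurableSingletonClass Y] (hX : IsMPSystem T μ) (hπ : IsFactorMap T μ S ν π)
    (hdis : IsDisintegration μ ν π μy) (hmeas : ∀ k, Measurable (Pm k))
    (hfactor : ∀ k k', k ≤ k' → ∃ c : Fin (r k') → Fin (r k), Pm k = c ∘ Pm k')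
    (hgen : ∀ s : Set X, MeasurableSet s → ∃ t : Set X,
      MeasurableSet[MeasurableSpace.generateFrom
        ({A : Set X | ∃ (m : ℕ) (g : G) (i : Fin (r m)), A = T g ⁻¹' (Pm m ⁻¹' {i})} ∪
         {A : Set X | ∃ B : Set Y, MeasurableSet B ∧ A = π ⁻¹' B})] t ∧
      μ (s ∆ t) = 0)
    {F : ℕ → Finset G} (hF : IsFolner F) (U : ℕ → ℝ) {rP : ℕ} {P : X → Fin rP}
    (hP : Measurable P) :
    slowEntropyPartRel T μy ν P U F ≤ ⨆ k, slowEntropyPartRel T μy ν (Pm k) U F := by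
  have := hX.prob
  refine slowEntropyPartRel_le_of_forall_exists T fun ε hε => ?_
  obtain ⟨k, K, hK, Q, hQ, hQK, hPQ⟩ := exists_determined_approx hX.meas hπ.meas hmeas hfactor
    hgen hP (δ := ε ^ 3 / 16) (by positivity)
  have hε₃ : 0 < ε / (8 * K.card ^ 2) :=
    div_pos hε (by have := Finset.card_pos.mpr ⟨1, hK⟩; positivity)
  refine ⟨r k, Pm k, _, hε₃, ?_, le_iSup (fun k => slowEntropyPartRel T μy ν (Pm k) U F) k⟩
  filter_upwards [hF.eventually_card_mul_sdiff_le K hε₃] with n hn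
  exact hamCovRel_le_of_determined hX hπ hdis hP hQ hK hQK hε hPQ.le hn

end Generating

theorem relative_slow_entropy_generating_partitions_general
    {G X Y : Type*} [Group G]
    [MeasurableSpace X] [MeasurableSpace Y] [StandardBorelSpace Y]
    (T : G → X → X) (μ : Measure X) (S : G → Y → Y) (ν : Measure Y)
    (hX : IsMPSystem T μ) (hY : IsMPSystem S ν)
    (π : X → Y) (hπ : IsFactorMap T μ S ν π)
    (μy : Y → Measure X) (hdis : IsDisintegration μ ν π μy)
    (r : ℕ → ℕ) (Pm : ∀ m, X → Fin (r m)) (hmeas : ∀ m, Measurable (Pm m))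
    (hrefine : ∀ m, ∃ c : Fin (r (m + 1)) → Fin (r m), Pm m = c ∘ Pm (m + 1))
    (hgen : ∀ s : Set X, MeasurableSet s → ∃ t : Set X,
      MeasurableSet[MeasurableSpace.generateFrom
        ({A : Set X | ∃ (m : ℕ) (g : G) (i : Fin (r m)), A = T g ⁻¹' (Pm m ⁻¹' {i})} ∪
         {A : Set X | ∃ B : Set Y, MeasurableSet B ∧ A = π ⁻¹' B})] t ∧
      μ (s ∆ t) = 0)
    (U : ℕ → ℝ) (F : ℕ → Finset G) (hF : IsFolner F) :
    (slowEntropyRel T μy ν U F = ⨆ m, slowEntropyPartRel T μy ν (Pm m) U F) ∧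
    Tendsto (fun m => slowEntropyPartRel T μy ν (Pm m) U F) atTop
      (nhds (slowEntropyRel T μy ν U F)) := by
  have := hY.prob
  have hfactor k k' (h : k ≤ k') : ∃ c : Fin (r k') → Fin (r k), Pm k = c ∘ Pm k' :=
    exists_comp_eq_of_le (α := fun k => Fin (r k)) hrefine h
  have hmono : Monotone fun m => slowEntropyPartRel T μy ν (Pm m) U F := fun k k' h =>
    let ⟨_, hc⟩ := hfactor k k' h
    slowEntropyPartRel_le_of_factor T hdis.prob hc U F
  have hsup : slowEntropyRel T μy ν U F = ⨆ m, slowEntropyPartRel T μy ν (Pm m) U F :=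
    le_antisymm
      (iSup₂_le fun _ _ => iSup_le fun hP =>
        slowEntropyPartRel_le_iSup_of_generating hX hπ hdis hmeas hfactor hgen hF U hP)
      (iSup_le fun m => le_iSup₂_of_le (r m) (Pm m) (le_iSup_of_le (hmeas m) le_rfl))
  exact ⟨hsup, hsup ▸ tendsto_atTop_iSup hmono⟩

/-- Theorem `GeneratingPartitionsDominate`.
If `(P_m)` is a refining sequence of finite measurable partitions that is generating for `X`
relative to `π`, then `h_slow^{U,(F_n)}(X | π) = lim_m h_slow^{U,(F_n)}(X, P_m | π)
= sup_m h_slow^{U,(F_n)}(X, P_m | π)` for every rate function `U` and Følner sequence. -/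
theorem relative_slow_entropy_generating_partitions
    {G X Y : Type*} [Group G] [Countable G]
    [MeasurableSpace X] [MeasurableSpace Y] [StandardBorelSpace X] [StandardBorelSpace Y]
    (T : G → X → X) (μ : Measure X) (S : G → Y → Y) (ν : Measure Y)
    (hX : IsMPSystem T μ) (hY : IsMPSystem S ν)
    (π : X → Y) (hπ : IsFactorMap T μ S ν π)
    (μy : Y → Measure X) (hdis : IsDisintegration μ ν π μy)
    (r : ℕ → ℕ) (Pm : ∀ m, X → Fin (r m)) (hmeas : ∀ m, Measurable (Pm m))
    (hrefine : ∀ m, ∃ c : Fin (r (m + 1)) → Fin (r m), Pm m = c ∘ Pm (m + 1))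
    (hgen : ∀ s : Set X, MeasurableSet s → ∃ t : Set X,
      MeasurableSet[MeasurableSpace.generateFrom
        ({A : Set X | ∃ (m : ℕ) (g : G) (i : Fin (r m)), A = T g ⁻¹' (Pm m ⁻¹' {i})} ∪
         {A : Set X | ∃ B : Set Y, MeasurableSet B ∧ A = π ⁻¹' B})] t ∧
      μ (s ∆ t) = 0)
    (U : ℕ → ℝ) (hU : IsRateFunction U) (F : ℕ → Finset G) (hF : IsFolner F) :
    (slowEntropyRel T μy ν U F = ⨆ m, slowEntropyPartRel T μy ν (Pm m) U F) ∧
    Tendsto (fun m => slowEntropyPartRel T μy ν (Pm m) U F) atTop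
      (nhds (slowEntropyRel T μy ν U F)) :=
  relative_slow_entropy_generating_partitions_general T μ S ν hX hY π hπ μy hdis r Pm hmeas hrefine
    hgen U F hF
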